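/- Let F be a field and d, k natural numbers with 1 ≤ k and k + 1 ≤ d. Let ℋ be a finite set of submodules of Fin (d+1) → F, each of finrank k+1, with Set.ncard ℋ ≤ ∑_{i=0}^{k} ⌊(d−k+i)/(i+1)⌋ (the sum of the natural-number floors (d−k+i)/(i+1) for i = 0,…,k). Then there exists a submodule W of Fin (d+1) → F with finrank W = d − k such that H ⊓ W ≠ ⊥ for every H ∈ ℋ. -/
import Mathlib


open Module

private lemma aux_exists_between {F V : Type*} [Field F] [AddCommGroup V] [Module F V]
    [FiniteDimensional F V] (n : ℕ) :
    ∀ (Z U : Submodule F V), Z ≤ U → finrank F Z + n ≤ finrank F U →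
      ∃ Y : Submodule F V, Z ≤ Y ∧ Y ≤ U ∧ finrank F Y = finrank F Z + n := by
  induction n with
  | zero => exact fun Z U h _ => ⟨Z, le_refl _, h, by omega⟩
  | succ n ih =>
    intro Z U hZU hle
    have hne : Z ≠ U := by
      intro h
      rw [h] at hle
      omega
    obtain ⟨x, hxU, hxZ⟩ := SetLike.exists_of_lt (lt_of_le_of_ne hZU hne)
    have hx0 : x ≠ 0 := fun h => hxZ (h ▸ Z.zero_mem)
    have hinf : Z ⊓ (F ∙ x) = ⊥ := by
      rw [eq_bot_iff]
      rintro v ⟨hvZ, hvS⟩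
      obtain ⟨a, rfl⟩ := Submodule.mem_span_singleton.mp hvS
      rcases eq_or_ne a 0 with rfl | ha
      · simp
      · have hx : a⁻¹ • a • x ∈ Z := Z.smul_mem a⁻¹ hvZ
        rw [smul_smul, inv_mul_cancel₀ ha, one_smul] at hx
        exact absurd hx hxZ
    have hr : finrank F (Z ⊔ (F ∙ x) : Submodule F V) = finrank F Z + 1 := by
      have h1 := Submodule.finrank_sup_add_finrank_inf_eq Z (F ∙ x)
      rw [hinf, finrank_span_singleton hx0] at h1
      simpa using h1
    have hYU : Z ⊔ (F ∙ x) ≤ U :=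
      sup_le hZU ((Submodule.span_singleton_le_iff_mem x U).mpr hxU)
    obtain ⟨Y, h1, h2, h3⟩ := ih (Z ⊔ (F ∙ x)) U hYU (by omega)
    exact ⟨Y, le_trans le_sup_left h1, h2, by omega⟩

private lemma aux_finrank_finset_sup_le {F V ι : Type*} [Field F] [AddCommGroup V] [Module F V]
    [FiniteDimensional F V] (s : Finset ι) (f : ι → Submodule F V) :
    finrank F (s.sup f : Submodule F V) ≤ ∑ a ∈ s, finrank F (f a) := by
  classical
  induction s using Finset.cons_induction with
  | empty => simp
  | cons a s ha ih =>
    rw [Finset.sup_cons, Finset.sum_cons]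
    exact le_trans (Submodule.finrank_add_le_finrank_add_finrank _ _) (by omega)

private lemma aux_key (F : Type*) [Field F] (d k : ℕ) (hkd : k + 1 ≤ d)
    (ℋ : Set (Submodule F (Fin (d + 1) → F))) (hfin : ℋ.Finite)
    (hrank : ∀ H ∈ ℋ, finrank F H = k + 1) :
    ∀ i, ∀ U : Submodule F (Fin (d + 1) → F), finrank F U = d - k + i →
    ∀ 𝒢 ⊆ ℋ, 𝒢.ncard ≤ ∑ j ∈ Finset.range i, (d - k + j) / (j + 1) →
    (∀ H ∈ ℋ, H ∉ 𝒢 → i + 1 ≤ finrank F (H ⊓ U : Submodule F (Fin (d + 1) → F))) →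
    ∃ W : Submodule F (Fin (d + 1) → F), W ≤ U ∧ finrank F W = d - k ∧
      ∀ H ∈ ℋ, H ⊓ W ≠ ⊥ := by
  classical
  have hamb : finrank F (Fin (d + 1) → F) = d + 1 := Module.finrank_fin_fun F
  intro i
  induction i with
  | zero =>
    intro U hU 𝒢 h𝒢ℋ hcard hsec
    have h𝒢 : 𝒢 = ∅ := by
      rw [← Set.ncard_eq_zero (hfin.subset h𝒢ℋ)]
      simpa using hcard
    refine ⟨U, le_refl _, by omega, fun H hH => ?_⟩
    have h1 : 1 ≤ finrank F (H ⊓ U : Submodule F (Fin (d + 1) → F)) :=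
      hsec H hH (by simp [h𝒢])
    intro hbot
    rw [hbot] at h1
    simp at h1
  | succ i ih =>
    intro U hU 𝒢 h𝒢ℋ hcard hsec
    -- every H ∈ ℋ has finrank (H ⊓ U) ≥ i + 1
    have hHU : ∀ H ∈ ℋ, i + 1 ≤ finrank F (H ⊓ U : Submodule F (Fin (d + 1) → F)) := by
      intro H hH
      have h1 := Submodule.finrank_sup_add_finrank_inf_eq H U
      have h2 : finrank F (H ⊔ U : Submodule F (Fin (d + 1) → F)) ≤ d + 1 := by
        have := Submodule.finrank_le (H ⊔ U)
        rwa [hamb] at this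
      rw [hrank H hH, hU] at h1
      omega
    set t := (d - k + i) / (i + 1) with ht
    obtain ⟨𝒯, h𝒯𝒢, h𝒯card⟩ := Set.exists_subset_card_eq (n := min t 𝒢.ncard)
      (min_le_right _ _)
    have h𝒢fin : 𝒢.Finite := hfin.subset h𝒢ℋ
    have h𝒯fin : 𝒯.Finite := h𝒢fin.subset h𝒯𝒢
    have h𝒯ℋ : 𝒯 ⊆ ℋ := h𝒯𝒢.trans h𝒢ℋ
    -- choose inside each H ∈ 𝒯 a subspace of H ⊓ U of finrank i + 1
    have hZex : ∀ H ∈ 𝒯, ∃ Z : Submodule F (Fin (d + 1) → F),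
        Z ≤ H ⊓ U ∧ finrank F Z = i + 1 := by
      intro H hH
      obtain ⟨Z, _, hZ2, hZ3⟩ := aux_exists_between (i + 1) ⊥ (H ⊓ U) bot_le
        (by simpa using hHU H (h𝒯ℋ hH))
      exact ⟨Z, hZ2, by simpa using hZ3⟩
    let Zf : Submodule F (Fin (d + 1) → F) → Submodule F (Fin (d + 1) → F) :=
      fun H => if h : H ∈ 𝒯 then (hZex H h).choose else ⊥
    have hZfeq : ∀ H (h : H ∈ 𝒯), Zf H = (hZex H h).choose := fun H h => dif_pos h
    have hZf1 : ∀ H ∈ 𝒯, Zf H ≤ H ⊓ U := fun H h => by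
      rw [hZfeq H h]
      exact (hZex H h).choose_spec.1
    have hZf2 : ∀ H ∈ 𝒯, finrank F (Zf H) = i + 1 := fun H h => by
      rw [hZfeq H h]
      exact (hZex H h).choose_spec.2
    set Z : Submodule F (Fin (d + 1) → F) := h𝒯fin.toFinset.sup Zf with hZdef
    have hZU : Z ≤ U := Finset.sup_le fun H hH =>
      le_trans (hZf1 H (h𝒯fin.mem_toFinset.mp hH)) inf_le_right
    have hZrank : finrank F Z ≤ d - k + i := by
      have h1 := aux_finrank_finset_sup_le h𝒯fin.toFinset Zf
      rw [← hZdef] at h1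
      have h2 : ∑ H ∈ h𝒯fin.toFinset, finrank F (Zf H) = h𝒯fin.toFinset.card * (i + 1) := by
        rw [Finset.sum_congr rfl fun H hH => hZf2 H (h𝒯fin.mem_toFinset.mp hH)]
        simp [mul_comm]
      have h3 : h𝒯fin.toFinset.card = min t 𝒢.ncard := by
        rw [← h𝒯card, Set.ncard_eq_toFinset_card _ h𝒯fin]
      have h4 : t * (i + 1) ≤ d - k + i := Nat.div_mul_le_self _ _
      have h5 : h𝒯fin.toFinset.card * (i + 1) ≤ t * (i + 1) :=
        Nat.mul_le_mul_right _ (h3 ▸ min_le_left _ _)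
      omega
    -- find the hyperplane Y of U containing Z
    obtain ⟨Y, hZY, hYU, hYrank⟩ := aux_exists_between (d - k + i - finrank F Z) Z U hZU
      (by omega)
    have hYrank' : finrank F Y = d - k + i := by omega
    -- apply the induction hypothesis
    obtain ⟨W, hWY, hWrank, hWmeets⟩ := ih Y hYrank' (𝒢 \ 𝒯)
      (fun H hH => h𝒢ℋ hH.1)
      (by
        have h1 : (𝒢 \ 𝒯).ncard = 𝒢.ncard - 𝒯.ncard := Set.ncard_diff h𝒯𝒢 h𝒯fin
        rw [Finset.sum_range_succ] at hcard
        omega)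
      (by
        intro H hH hHnot
        by_cases hH𝒯 : H ∈ 𝒯
        · -- Zf H ≤ H ⊓ Y with finrank i + 1
          have hle : Zf H ≤ H ⊓ Y :=
            le_inf (le_trans (hZf1 H hH𝒯) inf_le_left)
              (le_trans (Finset.le_sup (h𝒯fin.mem_toFinset.mpr hH𝒯)) hZY)
          calc i + 1 = finrank F (Zf H) := (hZf2 H hH𝒯).symm
            _ ≤ finrank F (H ⊓ Y : Submodule F (Fin (d + 1) → F)) :=
              Submodule.finrank_mono hle
        · have hHnot𝒢 : H ∉ 𝒢 := fun h => hHnot ⟨h, hH𝒯⟩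
          have h1 := hsec H hH hHnot𝒢
          -- finrank (H ⊓ U) ≤ finrank (H ⊓ Y) + 1
          have h2 := Submodule.finrank_sup_add_finrank_inf_eq (H ⊓ U) Y
          have h3 : (H ⊓ U) ⊓ Y = H ⊓ Y := by
            rw [inf_assoc, inf_eq_right.mpr hYU]
          have h4 : finrank F ((H ⊓ U) ⊔ Y : Submodule F (Fin (d + 1) → F)) ≤
              finrank F U :=
            Submodule.finrank_mono (sup_le (le_trans inf_le_right (le_refl U)) hYU)
          rw [h3, hYrank'] at h2
          rw [hU] at h4
          omega)
    exact ⟨W, le_trans hWY hYU, hWrank, hWmeets⟩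

theorem stmt_8 (F : Type*) [Field F] (d k : ℕ) (hk : 1 ≤ k) (hkd : k + 1 ≤ d)
    (ℋ : Set (Submodule F (Fin (d + 1) → F))) (hfin : ℋ.Finite)
    (hrank : ∀ H ∈ ℋ, finrank F H = k + 1)
    (hcard : Set.ncard ℋ ≤ ∑ i ∈ Finset.range (k + 1), (d - k + i) / (i + 1)) :
    ∃ W : Submodule F (Fin (d + 1) → F), finrank F W = d - k ∧
      ∀ H ∈ ℋ, H ⊓ W ≠ ⊥ := by
  have htop : finrank F (⊤ : Submodule F (Fin (d + 1) → F)) = d - k + (k + 1) := by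
    rw [finrank_top]
    rw [Module.finrank_fin_fun]
    omega
  obtain ⟨W, _, hW1, hW2⟩ := aux_key F d k hkd ℋ hfin hrank (k + 1) ⊤ htop ℋ
    (le_refl _) hcard (fun H hH hnot => absurd hH hnot)
  exact ⟨W, hW1, hW2⟩
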